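/- Let Γ and Δ be multisets of D-formulas and G-formulas respectively, and let Γ → Δ have a C-proof Ξ in which an ∨-L rule with upper sequents B,Σ → Π and D,Σ → Π and lower sequent B∨D,Σ → Π occurs with the following characteristic: there is no F ∈ Π such that B∨D,Σ → F has an I-proof, but there is an F ∈ Π such that D,Σ → F has an I-proof. Then D,Σ → Δ has a C-proof whose nonconstructiveness measure is smaller than μ(Ξ). -/

import Mathlib

set_option maxHeartbeats 1000000

/-- Terms of a first-order language: variables (de Bruijn indices for
quantified variables) and constants. -/
inductive Tm : Type
  | var : ℕ → Tm
  | const : ℕ → Tm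

namespace Tm

/-- Substitution of the term `u` for the variable with index `k`. -/
def subst (k : ℕ) (u : Tm) : Tm → Tm
  | var n => if n = k then u else var n
  | const c => const c

/-- The constant `c` occurs in a term. -/
def constIn (c : ℕ) : Tm → Prop
  | var _ => False
  | const d => d = c

end Tm

/-- First-order formulas over the primitives ⊤, ⊥, ∧, ∨, ⊃, ∃, ∀.
Quantifiers are represented with de Bruijn indices. -/
inductive Fm : Type
  | top : Fm
  | bot : Fm
  | atom : ℕ → List Tm → Fm
  | conj : Fm → Fm → Fm
  | disj : Fm → Fm → Fm
  | imp : Fm → Fm → Fm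
  | ex : Fm → Fm
  | all : Fm → Fm

namespace Fm

/-- Substitution of a term for the variable with de Bruijn index `k`. -/
def subst (k : ℕ) (u : Tm) : Fm → Fm
  | top => top
  | bot => bot
  | atom p ts => atom p (ts.map (Tm.subst k u))
  | conj a b => conj (subst k u a) (subst k u b)
  | disj a b => disj (subst k u a) (subst k u b)
  | imp a b => imp (subst k u a) (subst k u b)
  | ex a => ex (subst (k + 1) u a)
  | all a => all (subst (k + 1) u a)

/-- `[t/x]B`: instantiation of the outermost bound variable of the body of a
quantified formula with the term `u`. -/
def inst (u : Tm) (a : Fm) : Fm := subst 0 u a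

/-- Atomic formulas (⊤ and ⊥ are *not* atomic). -/
def isAtom : Fm → Prop
  | atom _ _ => True
  | _ => False

/-- Formulas that need no right-introduction rule in a uniform/O_G proof:
atomic formulas and ⊥. -/
def neutral (F : Fm) : Prop := F.isAtom ∨ F = bot

/-- The constant `c` occurs in a formula. -/
def constIn (c : ℕ) : Fm → Prop
  | top => False
  | bot => False
  | atom _ ts => ∃ t ∈ ts, t.constIn c
  | conj a b => constIn c a ∨ constIn c b
  | disj a b => constIn c a ∨ constIn c b
  | imp a b => constIn c a ∨ constIn c b
  | ex a => constIn c a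
  | all a => constIn c a

end Fm

/-- The eigenvariable (constant) `c` does not occur in the sequent `Γ → Δ`. -/
def FreshSeq (c : ℕ) (Γ Δ : Multiset Fm) : Prop :=
  (∀ F ∈ Γ, ¬ F.constIn c) ∧ ∀ F ∈ Δ, ¬ F.constIn c

/-- The sequent `Γ → Δ` is an axiom: ⊤ ∈ Δ, or some `A` that is ⊥ or atomic
belongs to both `Γ` and `Δ`. -/
def AxSeq (Γ Δ : Multiset Fm) : Prop :=
  Fm.top ∈ Δ ∨ ∃ A : Fm, (A = Fm.bot ∨ A.isAtom) ∧ A ∈ Γ ∧ A ∈ Δ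

/-- C-proofs: arbitrary derivations in the sequent calculus of the paper.
Sequents are pairs of multisets of formulas. -/
inductive CProof : Multiset Fm → Multiset Fm → Type
  | ax {Γ Δ : Multiset Fm} (h : AxSeq Γ Δ) : CProof Γ Δ
  | contrL {B : Fm} {Γ Δ : Multiset Fm} (p : CProof (B ::ₘ B ::ₘ Γ) Δ) : CProof (B ::ₘ Γ) Δ
  | contrR {B : Fm} {Γ Δ : Multiset Fm} (p : CProof Γ (B ::ₘ B ::ₘ Δ)) : CProof Γ (B ::ₘ Δ)
  | botR {D : Fm} {Γ Δ : Multiset Fm} (p : CProof Γ (Fm.bot ::ₘ Δ)) : CProof Γ (D ::ₘ Δ)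
  | andL {B D : Fm} {Γ Δ : Multiset Fm} (p : CProof (B ::ₘ D ::ₘ (B.conj D) ::ₘ Γ) Δ) :
      CProof ((B.conj D) ::ₘ Γ) Δ
  | andR {B D : Fm} {Γ Δ : Multiset Fm} (p : CProof Γ (B ::ₘ Δ)) (q : CProof Γ (D ::ₘ Δ)) :
      CProof Γ ((B.conj D) ::ₘ Δ)
  | orL {B D : Fm} {Γ Δ : Multiset Fm} (p : CProof (B ::ₘ Γ) Δ) (q : CProof (D ::ₘ Γ) Δ) :
      CProof ((B.disj D) ::ₘ Γ) Δ
  | orR1 {B D : Fm} {Γ Δ : Multiset Fm} (p : CProof Γ (B ::ₘ Δ)) : CProof Γ ((B.disj D) ::ₘ Δ)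
  | orR2 {B D : Fm} {Γ Δ : Multiset Fm} (p : CProof Γ (D ::ₘ Δ)) : CProof Γ ((B.disj D) ::ₘ Δ)
  | impL {B D : Fm} {Γ Δ Θ : Multiset Fm} (p : CProof ((B.imp D) ::ₘ Γ) (B ::ₘ Δ))
      (q : CProof (D ::ₘ Γ) Θ) : CProof ((B.imp D) ::ₘ Γ) (Δ + Θ)
  | impR {B D : Fm} {Γ Δ : Multiset Fm} (p : CProof (B ::ₘ Γ) (D ::ₘ Δ)) :
      CProof Γ ((B.imp D) ::ₘ Δ)
  | allL {B : Fm} {Γ Δ : Multiset Fm} (t : Tm)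
      (p : CProof ((B.inst t) ::ₘ (Fm.all B) ::ₘ Γ) Δ) : CProof ((Fm.all B) ::ₘ Γ) Δ
  | exR {B : Fm} {Γ Δ : Multiset Fm} (t : Tm) (p : CProof Γ ((B.inst t) ::ₘ Δ)) :
      CProof Γ ((Fm.ex B) ::ₘ Δ)
  | exL {B : Fm} {Γ Δ : Multiset Fm} (c : ℕ) (hc : FreshSeq c ((Fm.ex B) ::ₘ Γ) Δ)
      (p : CProof ((B.inst (Tm.const c)) ::ₘ Γ) Δ) : CProof ((Fm.ex B) ::ₘ Γ) Δ
  | allR {B : Fm} {Γ Δ : Multiset Fm} (c : ℕ) (hc : FreshSeq c Γ ((Fm.all B) ::ₘ Δ))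
      (p : CProof Γ ((B.inst (Tm.const c)) ::ₘ Δ)) : CProof Γ ((Fm.all B) ::ₘ Δ)

namespace CProof

/-- An I-proof is a C-proof in which every sequent has exactly one formula in
its succedent. -/
def isI : ∀ (Γ Δ : Multiset Fm), CProof Γ Δ → Prop
  | _, _, @ax _ Δ _ => Multiset.card Δ = 1
  | _, _, @contrL _ _ Δ p => Multiset.card Δ = 1 ∧ isI _ _ p
  | _, _, @contrR B _ Δ p => Multiset.card (B ::ₘ Δ) = 1 ∧ isI _ _ p
  | _, _, @botR D _ Δ p => Multiset.card (D ::ₘ Δ) = 1 ∧ isI _ _ p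
  | _, _, @andL _ _ _ Δ p => Multiset.card Δ = 1 ∧ isI _ _ p
  | _, _, @andR B D _ Δ p q => Multiset.card ((B.conj D) ::ₘ Δ) = 1 ∧ isI _ _ p ∧ isI _ _ q
  | _, _, @orL _ _ _ Δ p q => Multiset.card Δ = 1 ∧ isI _ _ p ∧ isI _ _ q
  | _, _, @orR1 B D _ Δ p => Multiset.card ((B.disj D) ::ₘ Δ) = 1 ∧ isI _ _ p
  | _, _, @orR2 B D _ Δ p => Multiset.card ((B.disj D) ::ₘ Δ) = 1 ∧ isI _ _ p
  | _, _, @impL _ _ _ Δ Θ p q => Multiset.card (Δ + Θ) = 1 ∧ isI _ _ p ∧ isI _ _ q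
  | _, _, @impR B D _ Δ p => Multiset.card ((B.imp D) ::ₘ Δ) = 1 ∧ isI _ _ p
  | _, _, @allL _ _ Δ _ p => Multiset.card Δ = 1 ∧ isI _ _ p
  | _, _, @exR B _ Δ _ p => Multiset.card ((Fm.ex B) ::ₘ Δ) = 1 ∧ isI _ _ p
  | _, _, @exL _ _ Δ _ _ p => Multiset.card Δ = 1 ∧ isI _ _ p
  | _, _, @allR B _ Δ _ _ p => Multiset.card ((Fm.all B) ::ₘ Δ) = 1 ∧ isI _ _ p

end CProof

/-- Classical provability: `Γ ⊢_C F`. -/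
def CProv (Γ : Multiset Fm) (F : Fm) : Prop := Nonempty (CProof Γ ({F} : Multiset Fm))

/-- Intuitionistic provability: `Γ ⊢_I F`. -/
def IProv (Γ : Multiset Fm) (F : Fm) : Prop := ∃ p : CProof Γ ({F} : Multiset Fm), p.isI

namespace CProof

open Classical in
/-- The nonconstructiveness measure of a C-proof: the number of
nonconstructive occurrences of ∨-L and ⊃-R rules in it. -/
noncomputable def mu : ∀ (Γ Δ : Multiset Fm), CProof Γ Δ → ℕ
  | _, _, ax _ => 0
  | _, _, contrL p => mu _ _ p
  | _, _, contrR p => mu _ _ p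
  | _, _, botR p => mu _ _ p
  | _, _, andL p => mu _ _ p
  | _, _, andR p q => mu _ _ p + mu _ _ q
  | _, _, @orL B D Γ Δ p q =>
      mu _ _ p + mu _ _ q +
        (if ∃ F ∈ Δ, IProv (B ::ₘ Γ) F ∧ IProv (D ::ₘ Γ) F then 0 else 1)
  | _, _, orR1 p => mu _ _ p
  | _, _, orR2 p => mu _ _ p
  | _, _, impL p q => mu _ _ p + mu _ _ q
  | _, _, @impR B D Γ _ p => mu _ _ p + (if IProv (B ::ₘ Γ) D then 0 else 1)
  | _, _, allL _ p => mu _ _ p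
  | _, _, exR _ p => mu _ _ p
  | _, _, exL _ _ p => mu _ _ p
  | _, _, allR _ _ p => mu _ _ p

/-- The sequent `S → P` appears in the given C-proof. -/
def occursSeq : ∀ (Γ Δ : Multiset Fm), CProof Γ Δ → Multiset Fm → Multiset Fm → Prop
  | _, _, @ax Γ Δ _, S, P => Γ = S ∧ Δ = P
  | _, _, @contrL B Γ Δ p, S, P => ((B ::ₘ Γ) = S ∧ Δ = P) ∨ occursSeq _ _ p S P
  | _, _, @contrR B Γ Δ p, S, P => (Γ = S ∧ (B ::ₘ Δ) = P) ∨ occursSeq _ _ p S P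
  | _, _, @botR D Γ Δ p, S, P => (Γ = S ∧ (D ::ₘ Δ) = P) ∨ occursSeq _ _ p S P
  | _, _, @andL B D Γ Δ p, S, P => (((B.conj D) ::ₘ Γ) = S ∧ Δ = P) ∨ occursSeq _ _ p S P
  | _, _, @andR B D Γ Δ p q, S, P =>
      (Γ = S ∧ ((B.conj D) ::ₘ Δ) = P) ∨ occursSeq _ _ p S P ∨ occursSeq _ _ q S P
  | _, _, @orL B D Γ Δ p q, S, P =>
      (((B.disj D) ::ₘ Γ) = S ∧ Δ = P) ∨ occursSeq _ _ p S P ∨ occursSeq _ _ q S P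
  | _, _, @orR1 B D Γ Δ p, S, P => (Γ = S ∧ ((B.disj D) ::ₘ Δ) = P) ∨ occursSeq _ _ p S P
  | _, _, @orR2 B D Γ Δ p, S, P => (Γ = S ∧ ((B.disj D) ::ₘ Δ) = P) ∨ occursSeq _ _ p S P
  | _, _, @impL B D Γ Δ Θ p q, S, P =>
      (((B.imp D) ::ₘ Γ) = S ∧ (Δ + Θ) = P) ∨ occursSeq _ _ p S P ∨ occursSeq _ _ q S P
  | _, _, @impR B D Γ Δ p, S, P => (Γ = S ∧ ((B.imp D) ::ₘ Δ) = P) ∨ occursSeq _ _ p S P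
  | _, _, @allL B Γ Δ _ p, S, P => (((Fm.all B) ::ₘ Γ) = S ∧ Δ = P) ∨ occursSeq _ _ p S P
  | _, _, @exR B Γ Δ _ p, S, P => (Γ = S ∧ ((Fm.ex B) ::ₘ Δ) = P) ∨ occursSeq _ _ p S P
  | _, _, @exL B Γ Δ _ _ p, S, P => (((Fm.ex B) ::ₘ Γ) = S ∧ Δ = P) ∨ occursSeq _ _ p S P
  | _, _, @allR B Γ Δ _ _ p, S, P => (Γ = S ∧ ((Fm.all B) ::ₘ Δ) = P) ∨ occursSeq _ _ p S P

/-- `hasImpR p B S P D` holds when an ⊃-R rule with upper sequent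
`B,S → P,D` and lower sequent `S → P,B⊃D` occurs in the proof `p`. -/
def hasImpR : ∀ (Γ Δ : Multiset Fm), CProof Γ Δ → Fm → Multiset Fm → Multiset Fm → Fm → Prop
  | _, _, ax _, _, _, _, _ => False
  | _, _, contrL p, B, S, P, D => hasImpR _ _ p B S P D
  | _, _, contrR p, B, S, P, D => hasImpR _ _ p B S P D
  | _, _, botR p, B, S, P, D => hasImpR _ _ p B S P D
  | _, _, andL p, B, S, P, D => hasImpR _ _ p B S P D
  | _, _, andR p q, B, S, P, D => hasImpR _ _ p B S P D ∨ hasImpR _ _ q B S P D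
  | _, _, orL p q, B, S, P, D => hasImpR _ _ p B S P D ∨ hasImpR _ _ q B S P D
  | _, _, orR1 p, B, S, P, D => hasImpR _ _ p B S P D
  | _, _, orR2 p, B, S, P, D => hasImpR _ _ p B S P D
  | _, _, impL p q, B, S, P, D => hasImpR _ _ p B S P D ∨ hasImpR _ _ q B S P D
  | _, _, @impR B' D' Γ' Δ' p, B, S, P, D =>
      (B' = B ∧ Γ' = S ∧ Δ' = P ∧ D' = D) ∨ hasImpR _ _ p B S P D
  | _, _, allL _ p, B, S, P, D => hasImpR _ _ p B S P D
  | _, _, exR _ p, B, S, P, D => hasImpR _ _ p B S P D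
  | _, _, exL _ _ p, B, S, P, D => hasImpR _ _ p B S P D
  | _, _, allR _ _ p, B, S, P, D => hasImpR _ _ p B S P D

/-- `hasOrL p B D S P` holds when an ∨-L rule with upper sequents
`B,S → P` and `D,S → P` and lower sequent `B∨D,S → P` occurs in `p`. -/
def hasOrL : ∀ (Γ Δ : Multiset Fm), CProof Γ Δ → Fm → Fm → Multiset Fm → Multiset Fm → Prop
  | _, _, ax _, _, _, _, _ => False
  | _, _, contrL p, B, D, S, P => hasOrL _ _ p B D S P
  | _, _, contrR p, B, D, S, P => hasOrL _ _ p B D S P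
  | _, _, botR p, B, D, S, P => hasOrL _ _ p B D S P
  | _, _, andL p, B, D, S, P => hasOrL _ _ p B D S P
  | _, _, andR p q, B, D, S, P => hasOrL _ _ p B D S P ∨ hasOrL _ _ q B D S P
  | _, _, @orL B' D' Γ' Δ' p q, B, D, S, P =>
      (B' = B ∧ D' = D ∧ Γ' = S ∧ Δ' = P) ∨ hasOrL _ _ p B D S P ∨ hasOrL _ _ q B D S P
  | _, _, orR1 p, B, D, S, P => hasOrL _ _ p B D S P
  | _, _, orR2 p, B, D, S, P => hasOrL _ _ p B D S P
  | _, _, impL p q, B, D, S, P => hasOrL _ _ p B D S P ∨ hasOrL _ _ q B D S P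
  | _, _, impR p, B, D, S, P => hasOrL _ _ p B D S P
  | _, _, allL _ p, B, D, S, P => hasOrL _ _ p B D S P
  | _, _, exR _ p, B, D, S, P => hasOrL _ _ p B D S P
  | _, _, exL _ _ p, B, D, S, P => hasOrL _ _ p B D S P
  | _, _, allR _ _ p, B, D, S, P => hasOrL _ _ p B D S P

/-- Every formula in `Δ` is atomic or ⊥. -/
def neutralM (Δ : Multiset Fm) : Prop := ∀ F ∈ Δ, F.neutral

/-- A uniform proof: an I-proof in which any sequent whose succedent contains
a non-atomic formula occurs only as the lower sequent of an inference rule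
that introduces the top-level logical symbol of that formula. -/
def isUniform : ∀ (Γ Δ : Multiset Fm), CProof Γ Δ → Prop
  | _, _, @ax _ Δ _ => Multiset.card Δ = 1
  | _, _, @contrL _ _ Δ p => Multiset.card Δ = 1 ∧ neutralM Δ ∧ isUniform _ _ p
  | _, _, @contrR B _ Δ p =>
      Multiset.card (B ::ₘ Δ) = 1 ∧ neutralM (B ::ₘ Δ) ∧ isUniform _ _ p
  | _, _, @botR D _ Δ p =>
      Multiset.card (D ::ₘ Δ) = 1 ∧ neutralM (D ::ₘ Δ) ∧ isUniform _ _ p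
  | _, _, @andL _ _ _ Δ p => Multiset.card Δ = 1 ∧ neutralM Δ ∧ isUniform _ _ p
  | _, _, @andR B D _ Δ p q =>
      Multiset.card ((B.conj D) ::ₘ Δ) = 1 ∧ isUniform _ _ p ∧ isUniform _ _ q
  | _, _, @orL _ _ _ Δ p q =>
      Multiset.card Δ = 1 ∧ neutralM Δ ∧ isUniform _ _ p ∧ isUniform _ _ q
  | _, _, @orR1 B D _ Δ p => Multiset.card ((B.disj D) ::ₘ Δ) = 1 ∧ isUniform _ _ p
  | _, _, @orR2 B D _ Δ p => Multiset.card ((B.disj D) ::ₘ Δ) = 1 ∧ isUniform _ _ p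
  | _, _, @impL _ _ _ Δ Θ p q =>
      Multiset.card (Δ + Θ) = 1 ∧ neutralM (Δ + Θ) ∧ isUniform _ _ p ∧ isUniform _ _ q
  | _, _, @impR B D _ Δ p => Multiset.card ((B.imp D) ::ₘ Δ) = 1 ∧ isUniform _ _ p
  | _, _, @allL _ _ Δ _ p => Multiset.card Δ = 1 ∧ neutralM Δ ∧ isUniform _ _ p
  | _, _, @exR B _ Δ _ p => Multiset.card ((Fm.ex B) ::ₘ Δ) = 1 ∧ isUniform _ _ p
  | _, _, @exL _ _ Δ _ _ p => Multiset.card Δ = 1 ∧ neutralM Δ ∧ isUniform _ _ p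
  | _, _, @allR B _ Δ _ _ p => Multiset.card ((Fm.all B) ::ₘ Δ) = 1 ∧ isUniform _ _ p

end CProof

/-- Uniform provability: `Γ ⊢_O F`. -/
def UProv (Γ : Multiset Fm) (F : Fm) : Prop :=
  ∃ p : CProof Γ ({F} : Multiset Fm), p.isUniform

/-- The ordering ⪰ measuring the strength of formulas as assumptions. -/
inductive Fm.ge : Fm → Fm → Prop
  | refl (F : Fm) : Fm.ge F F
  | imp {F A B : Fm} : Fm.ge F B → Fm.ge F (Fm.imp A B)
  | disjl {F A B : Fm} : Fm.ge F A → Fm.ge F (Fm.disj A B)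
  | disjr {F A B : Fm} : Fm.ge F B → Fm.ge F (Fm.disj A B)
  | ex {F P : Fm} (c : ℕ) : Fm.ge F (P.inst (Tm.const c)) → Fm.ge F (Fm.ex P)

/-- `MsGe Γ₁ Γ₂`: there is an injective map κ from `Γ₂` into `Γ₁` with
`κ(F) ⪰ F` for every `F ∈ Γ₂`. -/
def MsGe (Γ₁ Γ₂ : Multiset Fm) : Prop :=
  ∃ Γ' ≤ Γ₁, Multiset.Rel Fm.ge Γ' Γ₂

mutual
  /-- G-formulas: G ::= ⊤ | ⊥ | A | G∧G | G∨G | D⊃G | ∃x G. -/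
  inductive GFm : Fm → Prop
    | top : GFm Fm.top
    | bot : GFm Fm.bot
    | atom {p : ℕ} {ts : List Tm} : GFm (Fm.atom p ts)
    | conj {a b : Fm} : GFm a → GFm b → GFm (Fm.conj a b)
    | disj {a b : Fm} : GFm a → GFm b → GFm (Fm.disj a b)
    | imp {a b : Fm} : DFm a → GFm b → GFm (Fm.imp a b)
    | ex {a : Fm} : GFm a → GFm (Fm.ex a)

  /-- D-formulas: D ::= ⊤ | ⊥ | A | G⊃D | D∧D | D∨D | ∃x D | ∀x D. -/
  inductive DFm : Fm → Prop
    | top : DFm Fm.top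
    | bot : DFm Fm.bot
    | atom {p : ℕ} {ts : List Tm} : DFm (Fm.atom p ts)
    | imp {a b : Fm} : GFm a → DFm b → DFm (Fm.imp a b)
    | conj {a b : Fm} : DFm a → DFm b → DFm (Fm.conj a b)
    | disj {a b : Fm} : DFm a → DFm b → DFm (Fm.disj a b)
    | ex {a : Fm} : DFm a → DFm (Fm.ex a)
    | all {a : Fm} : DFm a → DFm (Fm.all a)
end
/-- I_G-proofs: derivations in the intuitionistic sequent calculus (single
succedent formula) augmented with the derived rules ∨-L_G and res_G, in which
the eigenvariable proviso on ∃-L and ∀-R also disallows constants in `G`. -/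
inductive IGProof (G : Fm) : Multiset Fm → Fm → Type
  | ax {Γ : Multiset Fm} {F : Fm} (h : AxSeq Γ ({F} : Multiset Fm)) : IGProof G Γ F
  | contrL {B : Fm} {Γ : Multiset Fm} {F : Fm} (p : IGProof G (B ::ₘ B ::ₘ Γ) F) :
      IGProof G (B ::ₘ Γ) F
  | botR {Γ : Multiset Fm} {F : Fm} (p : IGProof G Γ Fm.bot) : IGProof G Γ F
  | andL {B D : Fm} {Γ : Multiset Fm} {F : Fm}
      (p : IGProof G (B ::ₘ D ::ₘ (B.conj D) ::ₘ Γ) F) : IGProof G ((B.conj D) ::ₘ Γ) F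
  | andR {B D : Fm} {Γ : Multiset Fm} (p : IGProof G Γ B) (q : IGProof G Γ D) :
      IGProof G Γ (B.conj D)
  | orL {B D : Fm} {Γ : Multiset Fm} {F : Fm} (p : IGProof G (B ::ₘ Γ) F)
      (q : IGProof G (D ::ₘ Γ) F) : IGProof G ((B.disj D) ::ₘ Γ) F
  | orR1 {B D : Fm} {Γ : Multiset Fm} (p : IGProof G Γ B) : IGProof G Γ (B.disj D)
  | orR2 {B D : Fm} {Γ : Multiset Fm} (p : IGProof G Γ D) : IGProof G Γ (B.disj D)
  | impL {B D : Fm} {Γ : Multiset Fm} {F : Fm} (p : IGProof G ((B.imp D) ::ₘ Γ) B)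
      (q : IGProof G (D ::ₘ Γ) F) : IGProof G ((B.imp D) ::ₘ Γ) F
  | impR {B D : Fm} {Γ : Multiset Fm} (p : IGProof G (B ::ₘ Γ) D) : IGProof G Γ (B.imp D)
  | allL {B : Fm} {Γ : Multiset Fm} {F : Fm} (t : Tm)
      (p : IGProof G ((B.inst t) ::ₘ (Fm.all B) ::ₘ Γ) F) : IGProof G ((Fm.all B) ::ₘ Γ) F
  | exR {B : Fm} {Γ : Multiset Fm} (t : Tm) (p : IGProof G Γ (B.inst t)) :
      IGProof G Γ (Fm.ex B)
  | exL {B : Fm} {Γ : Multiset Fm} {F : Fm} (c : ℕ)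
      (hc : FreshSeq c ((Fm.ex B) ::ₘ Γ) ({F} : Multiset Fm)) (hG : ¬ G.constIn c)
      (p : IGProof G ((B.inst (Tm.const c)) ::ₘ Γ) F) : IGProof G ((Fm.ex B) ::ₘ Γ) F
  | allR {B : Fm} {Γ : Multiset Fm} (c : ℕ)
      (hc : FreshSeq c Γ ({Fm.all B} : Multiset Fm)) (hG : ¬ G.constIn c)
      (p : IGProof G Γ (B.inst (Tm.const c))) : IGProof G Γ (Fm.all B)
  | orLG {B D : Fm} {Γ : Multiset Fm} {F : Fm} (p : IGProof G (B ::ₘ Γ) F)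
      (q : IGProof G (D ::ₘ Γ) G) : IGProof G ((B.disj D) ::ₘ Γ) F
  | resG {Γ : Multiset Fm} {F : Fm} (p : IGProof G Γ G) : IGProof G Γ F

namespace IGProof

/-- The number of occurrences of the ∨-L rule in an I_G-proof. -/
def orLCount : ∀ (G : Fm) (Γ : Multiset Fm) (F : Fm), IGProof G Γ F → ℕ
  | _, _, _, ax _ => 0
  | _, _, _, contrL p => orLCount _ _ _ p
  | _, _, _, botR p => orLCount _ _ _ p
  | _, _, _, andL p => orLCount _ _ _ p
  | _, _, _, andR p q => orLCount _ _ _ p + orLCount _ _ _ q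
  | _, _, _, orL p q => orLCount _ _ _ p + orLCount _ _ _ q + 1
  | _, _, _, orR1 p => orLCount _ _ _ p
  | _, _, _, orR2 p => orLCount _ _ _ p
  | _, _, _, impL p q => orLCount _ _ _ p + orLCount _ _ _ q
  | _, _, _, impR p => orLCount _ _ _ p
  | _, _, _, allL _ p => orLCount _ _ _ p
  | _, _, _, exR _ p => orLCount _ _ _ p
  | _, _, _, exL _ _ _ p => orLCount _ _ _ p
  | _, _, _, allR _ _ _ p => orLCount _ _ _ p
  | _, _, _, orLG p q => orLCount _ _ _ p + orLCount _ _ _ q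
  | _, _, _, resG p => orLCount _ _ _ p

/-- The height of an I_G-proof: the length of its longest branch. -/
def height : ∀ (G : Fm) (Γ : Multiset Fm) (F : Fm), IGProof G Γ F → ℕ
  | _, _, _, ax _ => 1
  | _, _, _, contrL p => height _ _ _ p + 1
  | _, _, _, botR p => height _ _ _ p + 1
  | _, _, _, andL p => height _ _ _ p + 1
  | _, _, _, andR p q => max (height _ _ _ p) (height _ _ _ q) + 1
  | _, _, _, orL p q => max (height _ _ _ p) (height _ _ _ q) + 1
  | _, _, _, orR1 p => height _ _ _ p + 1
  | _, _, _, orR2 p => height _ _ _ p + 1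
  | _, _, _, impL p q => max (height _ _ _ p) (height _ _ _ q) + 1
  | _, _, _, impR p => height _ _ _ p + 1
  | _, _, _, allL _ p => height _ _ _ p + 1
  | _, _, _, exR _ p => height _ _ _ p + 1
  | _, _, _, exL _ _ _ p => height _ _ _ p + 1
  | _, _, _, allR _ _ _ p => height _ _ _ p + 1
  | _, _, _, orLG p q => max (height _ _ _ p) (height _ _ _ q) + 1
  | _, _, _, resG p => height _ _ _ p + 1

/-- The number of sequents appearing in an I_G-proof. -/
def size : ∀ (G : Fm) (Γ : Multiset Fm) (F : Fm), IGProof G Γ F → ℕ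
  | _, _, _, ax _ => 1
  | _, _, _, contrL p => size _ _ _ p + 1
  | _, _, _, botR p => size _ _ _ p + 1
  | _, _, _, andL p => size _ _ _ p + 1
  | _, _, _, andR p q => size _ _ _ p + size _ _ _ q + 1
  | _, _, _, orL p q => size _ _ _ p + size _ _ _ q + 1
  | _, _, _, orR1 p => size _ _ _ p + 1
  | _, _, _, orR2 p => size _ _ _ p + 1
  | _, _, _, impL p q => size _ _ _ p + size _ _ _ q + 1
  | _, _, _, impR p => size _ _ _ p + 1
  | _, _, _, allL _ p => size _ _ _ p + 1
  | _, _, _, exR _ p => size _ _ _ p + 1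
  | _, _, _, exL _ _ _ p => size _ _ _ p + 1
  | _, _, _, allR _ _ _ p => size _ _ _ p + 1
  | _, _, _, orLG p q => size _ _ _ p + size _ _ _ q + 1
  | _, _, _, resG p => size _ _ _ p + 1

/-- O_G-proofs: I_G-proofs containing no occurrence of the ∨-L rule, in which
any sequent whose succedent contains a non-atomic formula occurs only as the
lower sequent of a rule introducing the top-level symbol of that formula. -/
def isOG : ∀ (G : Fm) (Γ : Multiset Fm) (F : Fm), IGProof G Γ F → Prop
  | _, _, _, ax _ => True
  | _, _, _, @contrL _ _ _ F p => F.neutral ∧ isOG _ _ _ p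
  | _, _, _, @botR _ _ F p => F.neutral ∧ isOG _ _ _ p
  | _, _, _, @andL _ _ _ _ F p => F.neutral ∧ isOG _ _ _ p
  | _, _, _, andR p q => isOG _ _ _ p ∧ isOG _ _ _ q
  | _, _, _, orL _ _ => False
  | _, _, _, orR1 p => isOG _ _ _ p
  | _, _, _, orR2 p => isOG _ _ _ p
  | _, _, _, @impL _ _ _ _ F p q => F.neutral ∧ isOG _ _ _ p ∧ isOG _ _ _ q
  | _, _, _, impR p => isOG _ _ _ p
  | _, _, _, @allL _ _ _ F _ p => F.neutral ∧ isOG _ _ _ p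
  | _, _, _, exR _ p => isOG _ _ _ p
  | _, _, _, @exL _ _ _ F _ _ _ p => F.neutral ∧ isOG _ _ _ p
  | _, _, _, allR _ _ _ p => isOG _ _ _ p
  | _, _, _, @orLG _ _ _ _ F p q => F.neutral ∧ isOG _ _ _ p ∧ isOG _ _ _ q
  | _, _, _, @resG _ _ F p => F.neutral ∧ isOG _ _ _ p

/-- `hasOrL p B D S F` holds when an ∨-L rule with upper sequents `B,S → F`
and `D,S → F` and lower sequent `B∨D,S → F` occurs in the I_G-proof `p`. -/
def hasOrL : ∀ (G : Fm) (Γ : Multiset Fm) (W : Fm), IGProof G Γ W →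
    Fm → Fm → Multiset Fm → Fm → Prop
  | _, _, _, ax _, _, _, _, _ => False
  | _, _, _, contrL p, B, D, S, F => hasOrL _ _ _ p B D S F
  | _, _, _, botR p, B, D, S, F => hasOrL _ _ _ p B D S F
  | _, _, _, andL p, B, D, S, F => hasOrL _ _ _ p B D S F
  | _, _, _, andR p q, B, D, S, F => hasOrL _ _ _ p B D S F ∨ hasOrL _ _ _ q B D S F
  | _, _, _, @orL _ B' D' Γ' F' p q, B, D, S, F =>
      (B' = B ∧ D' = D ∧ Γ' = S ∧ F' = F) ∨ hasOrL _ _ _ p B D S F ∨ hasOrL _ _ _ q B D S F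
  | _, _, _, orR1 p, B, D, S, F => hasOrL _ _ _ p B D S F
  | _, _, _, orR2 p, B, D, S, F => hasOrL _ _ _ p B D S F
  | _, _, _, impL p q, B, D, S, F => hasOrL _ _ _ p B D S F ∨ hasOrL _ _ _ q B D S F
  | _, _, _, impR p, B, D, S, F => hasOrL _ _ _ p B D S F
  | _, _, _, allL _ p, B, D, S, F => hasOrL _ _ _ p B D S F
  | _, _, _, exR _ p, B, D, S, F => hasOrL _ _ _ p B D S F
  | _, _, _, exL _ _ _ p, B, D, S, F => hasOrL _ _ _ p B D S F
  | _, _, _, allR _ _ _ p, B, D, S, F => hasOrL _ _ _ p B D S F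
  | _, _, _, orLG p q, B, D, S, F => hasOrL _ _ _ p B D S F ∨ hasOrL _ _ _ q B D S F
  | _, _, _, resG p, B, D, S, F => hasOrL _ _ _ p B D S F

end IGProof

/-- In the simplified syntax, `A` ranges over atomic formulas together with
⊤ and ⊥. -/
def AtFm (F : Fm) : Prop := F.isAtom ∨ F = Fm.top ∨ F = Fm.bot

/-- `disjs A [B₁,…,Bₙ]` is the disjunction `A ∨ B₁ ∨ … ∨ Bₙ`. -/
def disjs (A : Fm) : List Fm → Fm
  | [] => A
  | B :: l => Fm.disj A (disjs B l)

mutual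
  /-- Goals in the simplified syntax: G ::= A | G∧G | G∨G | D⊃G | ∃x G. -/
  inductive Goal : Fm → Prop
    | atm {A : Fm} : AtFm A → Goal A
    | conj {a b : Fm} : Goal a → Goal b → Goal (Fm.conj a b)
    | disj {a b : Fm} : Goal a → Goal b → Goal (Fm.disj a b)
    | imp {a b : Fm} : PCl a → Goal b → Goal (Fm.imp a b)
    | ex {a : Fm} : Goal a → Goal (Fm.ex a)

  /-- Program clauses in the simplified syntax:
  D ::= (A∨…∨A) | G⊃(A∨…∨A) | ∀x D. -/
  inductive PCl : Fm → Prop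
    | head {A : Fm} {l : List Fm} : AtFm A → (∀ B ∈ l, AtFm B) → PCl (disjs A l)
    | impHead {g A : Fm} {l : List Fm} : Goal g → AtFm A → (∀ B ∈ l, AtFm B) →
        PCl (Fm.imp g (disjs A l))
    | all {d : Fm} : PCl d → PCl (Fm.all d)
end

/-- The instances `[D]` of a program clause `D`, as pairs whose first
component is `∅` (`none`) or `{G}` (`some G`) and whose second component is
the collection of head atoms. -/
inductive ClInst : Fm → Option Fm → Multiset Fm → Prop
  | head {A : Fm} {l : List Fm} : AtFm A → (∀ B ∈ l, AtFm B) →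
      ClInst (disjs A l) none (A ::ₘ (l : Multiset Fm))
  | impHead {g A : Fm} {l : List Fm} : Goal g → AtFm A → (∀ B ∈ l, AtFm B) →
      ClInst (Fm.imp g (disjs A l)) (some g) (A ::ₘ (l : Multiset Fm))
  | all {d : Fm} {o : Option Fm} {m : Multiset Fm} (t : Tm) :
      ClInst (d.inst t) o m → ClInst (Fm.all d) o m

/-- `[Γ]`: the instances of the clauses in `Γ`. -/
def GammaInst (Γ : Multiset Fm) (o : Option Fm) (m : Multiset Fm) : Prop :=
  ∃ D ∈ Γ, ClInst D o m

/-- The reduced proof system relative to the goal `G`: axioms `Δ → ⊤`, the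
rules RESTART, ATOMIC and BACKCHAIN relativized to `G`, and ∨-R, ∧-R, ⊃-R
and ∃-R. -/
inductive RP (G : Fm) : Multiset Fm → Fm → Prop
  | topAx {Γ : Multiset Fm} : RP G Γ Fm.top
  | restart {Γ : Multiset Fm} {C : Fm} (hC : C.isAtom ∨ C = Fm.bot) (p : RP G Γ G) :
      RP G Γ C
  | atomic {Γ : Multiset Fm} {C : Fm} {m : Multiset Fm} (hC : C.isAtom ∨ C = Fm.bot)
      (h : GammaInst Γ none (C ::ₘ m) ∨ GammaInst Γ none (Fm.bot ::ₘ m))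
      (ps : ∀ A ∈ m, RP G (A ::ₘ Γ) G) : RP G Γ C
  | backchain {Γ : Multiset Fm} {C G' : Fm} {m : Multiset Fm}
      (hC : C.isAtom ∨ C = Fm.bot)
      (h : GammaInst Γ (some G') (C ::ₘ m) ∨ GammaInst Γ (some G') (Fm.bot ::ₘ m))
      (p : RP G Γ G') (ps : ∀ A ∈ m, RP G (A ::ₘ Γ) G) : RP G Γ C
  | orR1 {Γ : Multiset Fm} {B D : Fm} (p : RP G Γ B) : RP G Γ (B.disj D)
  | orR2 {Γ : Multiset Fm} {B D : Fm} (p : RP G Γ D) : RP G Γ (B.disj D)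
  | andR {Γ : Multiset Fm} {B D : Fm} (p : RP G Γ B) (q : RP G Γ D) : RP G Γ (B.conj D)
  | impR {Γ : Multiset Fm} {B D : Fm} (p : RP G (B ::ₘ Γ) D) : RP G Γ (B.imp D)
  | exR {Γ : Multiset Fm} {B : Fm} (t : Tm) (p : RP G Γ (B.inst t)) : RP G Γ (Fm.ex B)


/-!
Induction on `Ξ`. At the ∨-L occurrence itself the right premise `D,Σ → Π` has smaller measure,
because the occurrence is nonconstructive: I-proofs of `B,Σ → F` and `D,Σ → F` would combine into
one of `B∨D,Σ → F`. Below the occurrence the rules are rebuilt over `D,Σ`. This works because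
`D,Σ` dominates, in the ordering ⪰ (`B ⪰ B∨D`, `D ⪰ B⊃D`, `[c/x]B ⪰ ∃x B`), every antecedent on
the path to the root, so the other premise of a binary rule can be strengthened to `D,Σ`; such a
strengthening never increases `μ`, since I-provability is monotone under it. The D/G shape of the
end sequent rules out ∀-R on that path, whose eigenvariable could occur in `D,Σ`.
-/

open Multiset

theorem Multiset.exists_eq_cons_of_cons_le {α : Type*} {a : α} {s t : Multiset α}
    (h : a ::ₘ s ≤ t) : ∃ u, t = a ::ₘ u ∧ s ≤ u := by
  obtain ⟨u, rfl⟩ := exists_cons_of_mem (mem_of_le h (mem_cons_self a s))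
  exact ⟨u, rfl, (cons_le_cons_iff a).1 h⟩

theorem Multiset.exists_eq_add_of_add_le {α : Type*} {s t r : Multiset α}
    (h : s + t ≤ r) : ∃ u, r = u + t ∧ s ≤ u := by
  obtain ⟨u, rfl⟩ := le_iff_exists_add.1 h
  exact ⟨s + u, add_right_comm s t u, le_add_right s u⟩

/-- The instances are implicit so that they unify with the classical ones in `CProof.mu`. -/
theorem ite_zero_one_le_of_imp {P Q : Prop} {_ : Decidable P} {_ : Decidable Q} (h : P → Q) :
    (if Q then 0 else 1 : ℕ) ≤ if P then 0 else 1 := by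
  split_ifs <;> simp_all

namespace Tm

def ren (h : ℕ → ℕ) : Tm → Tm
  | var n => var n
  | const c => const (h c)

theorem ren_subst (h : ℕ → ℕ) (k : ℕ) (u t : Tm) :
    (Tm.subst k u t).ren h = Tm.subst k (u.ren h) (t.ren h) := by
  cases t with
  | var n => by_cases hn : n = k <;> simp [subst, ren, hn]
  | const d => rfl

theorem ren_congr {h h' : ℕ → ℕ} {t : Tm} (H : ∀ c, t.constIn c → h c = h' c) :
    t.ren h = t.ren h' := by
  cases t with
  | var n => rfl
  | const d => simp [ren, H d rfl]

@[simp]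
theorem ren_id : ren id = id := funext fun t => by cases t <;> rfl

theorem setOf_constIn_subsingleton (t : Tm) : {c | t.constIn c}.Subsingleton := by
  cases t <;> simp [constIn]

end Tm

namespace Fm

@[simp]
def ren (h : ℕ → ℕ) : Fm → Fm
  | top => top
  | bot => bot
  | atom p ts => atom p (ts.map (Tm.ren h))
  | conj a b => conj (a.ren h) (b.ren h)
  | disj a b => disj (a.ren h) (b.ren h)
  | imp a b => imp (a.ren h) (b.ren h)
  | ex a => ex (a.ren h)
  | all a => all (a.ren h)

theorem ren_subst (h : ℕ → ℕ) (k : ℕ) (u : Tm) (F : Fm) :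
    (F.subst k u).ren h = (F.ren h).subst k (u.ren h) := by
  induction F generalizing k <;> simp_all [subst, Tm.ren_subst]

theorem ren_inst (h : ℕ → ℕ) (u : Tm) (F : Fm) :
    (F.inst u).ren h = (F.ren h).inst (u.ren h) :=
  ren_subst h 0 u F

theorem ren_congr {h h' : ℕ → ℕ} {F : Fm} (H : ∀ c, F.constIn c → h c = h' c) :
    F.ren h = F.ren h' := by
  induction F with
  | top | bot => rfl
  | atom p ts =>
      simp only [ren, atom.injEq, true_and]
      exact List.map_congr_left fun t ht => Tm.ren_congr fun c hc => H c ⟨t, ht, hc⟩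
  | conj a b iha ihb | disj a b iha ihb | imp a b iha ihb =>
      simp only [ren, conj.injEq, disj.injEq, imp.injEq]
      exact ⟨iha fun c hc => H c (Or.inl hc), ihb fun c hc => H c (Or.inr hc)⟩
  | ex a ih | all a ih => simp only [ren, ex.injEq, all.injEq]; exact ih H

@[simp]
theorem ren_id : ren id = id :=
  funext fun F => by induction F <;> simp_all

theorem ren_update {h : ℕ → ℕ} {c e : ℕ} {F : Fm} (hF : ¬ F.constIn c) :
    F.ren (Function.update h c e) = F.ren h :=
  ren_congr fun d hd => Function.update_of_ne (fun hdc => hF (by subst hdc; exact hd)) _ _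

theorem ren_update_inst_const {h : ℕ → ℕ} {c e : ℕ} {F : Fm} (hF : ¬ F.constIn c) :
    (F.inst (Tm.const c)).ren (Function.update h c e) = (F.ren h).inst (Tm.const e) := by
  rw [ren_inst, ren_update hF]
  simp [Tm.ren]

theorem map_ren_update {h : ℕ → ℕ} {c e : ℕ} {M : Multiset Fm}
    (hM : ∀ F ∈ M, ¬ F.constIn c) : M.map (ren (Function.update h c e)) = M.map (ren h) :=
  map_congr rfl fun _ hF => ren_update (hM _ hF)

theorem isAtom_ren {h : ℕ → ℕ} {A : Fm} (hA : A.isAtom) : (A.ren h).isAtom := by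
  cases A <;> simp_all [isAtom, ren]

theorem finite_setOf_constIn (F : Fm) : {c | F.constIn c}.Finite := by
  induction F with
  | top | bot => simp [constIn]
  | atom p ts =>
      have : {c | (atom p ts).constIn c} = ⋃ t ∈ ts, {c | t.constIn c} := by
        ext c; simp [constIn]
      rw [this]
      exact ts.finite_toSet.biUnion fun t _ => (Tm.setOf_constIn_subsingleton t).finite
  | conj a b iha ihb | disj a b iha ihb | imp a b iha ihb =>
      exact (iha.union ihb).subset fun c hc => hc
  | ex a ih | all a ih => exact ih

end Fm

theorem exists_freshSeq (Γ Δ : Multiset Fm) : ∃ c, FreshSeq c Γ Δ := by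
  have hfin : {c | ∃ F ∈ Γ + Δ, F.constIn c}.Finite := by
    have : {c | ∃ F ∈ Γ + Δ, F.constIn c} = ⋃ F ∈ {F | F ∈ Γ + Δ}, {c | F.constIn c} := by
      ext c; simp
    rw [this]
    exact (Γ + Δ).finite_toSet.biUnion fun F _ => F.finite_setOf_constIn
  obtain ⟨c, hc⟩ := hfin.exists_notMem
  refine ⟨c, fun F hF hFc => hc ⟨F, mem_add.2 (Or.inl hF), hFc⟩,
    fun F hF hFc => hc ⟨F, mem_add.2 (Or.inr hF), hFc⟩⟩

namespace Fm

theorem ge_conj_iff {E a b : Fm} : E.ge (conj a b) ↔ E = conj a b :=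
  ⟨fun h => by cases h; rfl, fun h => h ▸ ge.refl _⟩

theorem ge_all_iff {E a : Fm} : E.ge (all a) ↔ E = all a :=
  ⟨fun h => by cases h; rfl, fun h => h ▸ ge.refl _⟩

theorem ge_disj_iff {E a b : Fm} : E.ge (disj a b) ↔ E = disj a b ∨ E.ge a ∨ E.ge b := by
  refine ⟨fun h => ?_, ?_⟩
  · cases h with
    | refl => exact Or.inl rfl
    | disjl h => exact Or.inr (Or.inl h)
    | disjr h => exact Or.inr (Or.inr h)
  · rintro (rfl | h | h)
    exacts [ge.refl _, ge.disjl h, ge.disjr h]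

theorem ge_imp_iff {E a b : Fm} : E.ge (imp a b) ↔ E = imp a b ∨ E.ge b := by
  refine ⟨fun h => ?_, ?_⟩
  · cases h with
    | refl => exact Or.inl rfl
    | imp h => exact Or.inr h
  · rintro (rfl | h)
    exacts [ge.refl _, ge.imp h]

theorem ge_ex_iff {E a : Fm} : E.ge (ex a) ↔ E = ex a ∨ ∃ c, E.ge (a.inst (Tm.const c)) := by
  refine ⟨fun h => ?_, ?_⟩
  · cases h with
    | refl => exact Or.inl rfl
    | ex c h => exact Or.inr ⟨c, h⟩
  · rintro (rfl | ⟨c, h⟩)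
    exacts [ge.refl _, ge.ex c h]

theorem ge.eq_of_bot_or_isAtom {E A : Fm} (h : E.ge A) (hA : A = bot ∨ A.isAtom) : E = A := by
  cases h with
  | refl => rfl
  | _ => simp [isAtom] at hA

end Fm

/-- `MsGe` without injectivity, so that it also absorbs contraction and weakening. -/
def SetGe (Γ₁ Γ₂ : Multiset Fm) : Prop := ∀ F ∈ Γ₂, ∃ E ∈ Γ₁, E.ge F

namespace SetGe

variable {Γ₁ Γ₂ : Multiset Fm}

theorem refl (Γ : Multiset Fm) : SetGe Γ Γ := fun F hF => ⟨F, hF, Fm.ge.refl F⟩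

theorem cons_right_iff {F : Fm} : SetGe Γ₁ (F ::ₘ Γ₂) ↔ (∃ E ∈ Γ₁, E.ge F) ∧ SetGe Γ₁ Γ₂ :=
  forall_mem_cons

theorem of_mem {E F : Fm} (hE : E ∈ Γ₁) (hEF : E.ge F) (h : SetGe Γ₁ Γ₂) :
    SetGe Γ₁ (F ::ₘ Γ₂) :=
  cons_right_iff.2 ⟨⟨E, hE, hEF⟩, h⟩

theorem of_cons_right {F : Fm} (h : SetGe Γ₁ (F ::ₘ Γ₂)) : SetGe Γ₁ Γ₂ :=
  (cons_right_iff.1 h).2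

theorem mono_head {F F' : Fm} (h : SetGe Γ₁ (F ::ₘ Γ₂)) (hF : ∀ {E : Fm}, E.ge F → E.ge F') :
    SetGe Γ₁ (F' ::ₘ Γ₂) :=
  have ⟨⟨_, hE, hEF⟩, h⟩ := cons_right_iff.1 h
  h.of_mem hE (hF hEF)

theorem cons_left {A : Fm} (h : SetGe Γ₁ Γ₂) : SetGe (A ::ₘ Γ₁) Γ₂ :=
  fun F hF => (h F hF).imp fun _ hE => ⟨mem_cons_of_mem hE.1, hE.2⟩

theorem cons_self {F : Fm} (h : SetGe Γ₁ Γ₂) : SetGe (F ::ₘ Γ₁) (F ::ₘ Γ₂) :=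
  h.cons_left.of_mem (mem_cons_self F Γ₁) (Fm.ge.refl F)

end SetGe

theorem AxSeq.of_setGe_map_ren {Γ Δ Γ₁ Δ₁ : Multiset Fm} {h : ℕ → ℕ} (ha : AxSeq Γ Δ)
    (hΓ : SetGe Γ₁ (Γ.map (Fm.ren h))) (hΔ : Δ.map (Fm.ren h) ≤ Δ₁) : AxSeq Γ₁ Δ₁ := by
  rcases ha with htop | ⟨A, hA, hAΓ, hAΔ⟩
  · exact Or.inl (mem_of_le hΔ (mem_map_of_mem (Fm.ren h) htop))
  · obtain ⟨E, hE, hge⟩ := hΓ _ (mem_map_of_mem _ hAΓ)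
    have hA' : A.ren h = Fm.bot ∨ (A.ren h).isAtom :=
      hA.imp (fun hA => by simp [hA]) Fm.isAtom_ren
    exact Or.inr ⟨A.ren h, hA', hge.eq_of_bot_or_isAtom hA' ▸ hE,
      mem_of_le hΔ (mem_map_of_mem _ hAΔ)⟩

theorem CProof.card_eq_one_of_isI {Γ Δ : Multiset Fm} {p : CProof Γ Δ} (hp : p.isI) :
    card Δ = 1 := by
  cases p <;> first | exact hp | exact hp.1

def IProvMonotone : Prop :=
  ∀ (h : ℕ → ℕ) {Γ Γ₁ : Multiset Fm} {F : Fm},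
    SetGe Γ₁ (Γ.map (Fm.ren h)) → IProv Γ F → IProv Γ₁ (F.ren h)

namespace CProof

/-- Renaming constants by `h` lets the eigenvariables of ∃-L and ∀-R be made fresh for the new
sequent. The bound on `μ` needs I-provability to be monotone under the same operation, which is
the first half of this lemma applied to other proofs; it is therefore a premise of the second half,
discharged in `iProvMonotone`. -/
theorem exists_of_setGe_map_ren {Γ Δ : Multiset Fm} (p : CProof Γ Δ) (h : ℕ → ℕ)
    {Γ₁ Δ₁ : Multiset Fm} (hΓ : SetGe Γ₁ (Γ.map (Fm.ren h))) (hΔ : Δ.map (Fm.ren h) ≤ Δ₁) :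
    ∃ q : CProof Γ₁ Δ₁, (p.isI → card Δ₁ = 1 → q.isI) ∧ (IProvMonotone → q.mu ≤ p.mu) := by
  induction p generalizing h Γ₁ Δ₁ with
  | ax ha => exact ⟨.ax (ha.of_setGe_map_ren hΓ hΔ), fun _ h1 => h1, fun _ => Nat.zero_le _⟩
  | @contrL B Γ Δ p ih =>
      rw [map_cons] at hΓ
      obtain ⟨⟨E, hE, hEB⟩, -⟩ := SetGe.cons_right_iff.1 hΓ
      obtain ⟨q, hI, hmu⟩ := ih h (by simpa only [map_cons] using hΓ.of_mem hE hEB) hΔ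
      exact ⟨q, fun hp h1 => hI hp.2 h1, hmu⟩
  | @contrR B Γ Δ p ih =>
      rw [map_cons] at hΔ
      obtain ⟨Δ', rfl, hΔ'⟩ := exists_eq_cons_of_cons_le hΔ
      obtain ⟨q, -, hmu⟩ := ih h hΓ (Δ₁ := B.ren h ::ₘ B.ren h ::ₘ Δ')
        (by simpa only [map_cons] using cons_le_cons _ (cons_le_cons _ hΔ'))
      refine ⟨q.contrR, fun hp _ => ?_, hmu⟩
      have := card_eq_one_of_isI hp.2
      simp at this
  | @botR D Γ Δ p ih =>
      rw [map_cons] at hΔ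
      obtain ⟨Δ', rfl, hΔ'⟩ := exists_eq_cons_of_cons_le hΔ
      obtain ⟨q, hI, hmu⟩ := ih h hΓ (Δ₁ := Fm.bot ::ₘ Δ')
        (by simpa only [map_cons, Fm.ren] using cons_le_cons _ hΔ')
      exact ⟨q.botR, fun hp h1 => ⟨h1, hI hp.2 (by simpa using h1)⟩, hmu⟩
  | @andL B D Γ Δ p ih =>
      simp only [map_cons, Fm.ren, SetGe.cons_right_iff, Fm.ge_conj_iff] at hΓ
      obtain ⟨⟨_, hE, rfl⟩, hΓ⟩ := hΓ
      obtain ⟨Γ', rfl⟩ := exists_cons_of_mem hE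
      have hΓ' := ((hΓ.of_mem hE (Fm.ge.refl _)).cons_self (F := D.ren h)).cons_self (F := B.ren h)
      obtain ⟨q, hI, hmu⟩ := ih h (by simpa only [map_cons, Fm.ren] using hΓ') hΔ
      exact ⟨q.andL, fun hp h1 => ⟨h1, hI hp.2 h1⟩, hmu⟩
  | @andR B D Γ Δ p₁ p₂ ih₁ ih₂ =>
      simp only [map_cons, Fm.ren] at hΔ
      obtain ⟨Δ', rfl, hΔ'⟩ := exists_eq_cons_of_cons_le hΔ
      obtain ⟨q₁, hI₁, hmu₁⟩ := ih₁ h hΓ (Δ₁ := B.ren h ::ₘ Δ')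
        (by simpa only [map_cons] using cons_le_cons _ hΔ')
      obtain ⟨q₂, hI₂, hmu₂⟩ := ih₂ h hΓ (Δ₁ := D.ren h ::ₘ Δ')
        (by simpa only [map_cons] using cons_le_cons _ hΔ')
      refine ⟨q₁.andR q₂, fun hp h1 => ⟨h1, hI₁ hp.2.1 (by simpa using h1),
        hI₂ hp.2.2 (by simpa using h1)⟩, fun hm => add_le_add (hmu₁ hm) (hmu₂ hm)⟩
  | @orL B D Γ Δ p₁ p₂ ih₁ ih₂ =>
      simp only [map_cons, Fm.ren, SetGe.cons_right_iff, Fm.ge_disj_iff] at hΓ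
      obtain ⟨⟨E, hE, rfl | hB | hD⟩, hΓ⟩ := hΓ
      · have hΓB : SetGe (B.ren h ::ₘ Γ₁) ((B ::ₘ Γ).map (Fm.ren h)) := by
          rw [map_cons]; exact hΓ.cons_self
        have hΓD : SetGe (D.ren h ::ₘ Γ₁) ((D ::ₘ Γ).map (Fm.ren h)) := by
          rw [map_cons]; exact hΓ.cons_self
        obtain ⟨q₁, hI₁, hmu₁⟩ := ih₁ h hΓB hΔ
        obtain ⟨q₂, hI₂, hmu₂⟩ := ih₂ h hΓD hΔ
        obtain ⟨Γ', rfl⟩ := exists_cons_of_mem hE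
        refine ⟨(q₁.orL q₂).contrL, fun hp h1 => ⟨h1, h1, hI₁ hp.2.1 h1, hI₂ hp.2.2 h1⟩,
          fun hm => add_le_add (add_le_add (hmu₁ hm) (hmu₂ hm)) (ite_zero_one_le_of_imp ?_)⟩
        rintro ⟨F, hF, hFB, hFD⟩
        exact ⟨F.ren h, mem_of_le hΔ (mem_map_of_mem _ hF), hm h hΓB hFB, hm h hΓD hFD⟩
      · obtain ⟨q, hI, hmu⟩ := ih₁ h (by rw [map_cons]; exact hΓ.of_mem hE hB) hΔ
        exact ⟨q, fun hp h1 => hI hp.2.1 h1, fun hm => (hmu hm).trans (by simp only [mu]; omega)⟩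
      · obtain ⟨q, hI, hmu⟩ := ih₂ h (by rw [map_cons]; exact hΓ.of_mem hE hD) hΔ
        exact ⟨q, fun hp h1 => hI hp.2.2 h1, fun hm => (hmu hm).trans (by simp only [mu]; omega)⟩
  | @orR1 B D Γ Δ p ih =>
      simp only [map_cons, Fm.ren] at hΔ
      obtain ⟨Δ', rfl, hΔ'⟩ := exists_eq_cons_of_cons_le hΔ
      obtain ⟨q, hI, hmu⟩ := ih h hΓ (Δ₁ := B.ren h ::ₘ Δ')
        (by simpa only [map_cons] using cons_le_cons _ hΔ')
      exact ⟨q.orR1, fun hp h1 => ⟨h1, hI hp.2 (by simpa using h1)⟩, hmu⟩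
  | @orR2 B D Γ Δ p ih =>
      simp only [map_cons, Fm.ren] at hΔ
      obtain ⟨Δ', rfl, hΔ'⟩ := exists_eq_cons_of_cons_le hΔ
      obtain ⟨q, hI, hmu⟩ := ih h hΓ (Δ₁ := D.ren h ::ₘ Δ')
        (by simpa only [map_cons] using cons_le_cons _ hΔ')
      exact ⟨q.orR2, fun hp h1 => ⟨h1, hI hp.2 (by simpa using h1)⟩, hmu⟩
  | @impL B D Γ Δ Θ p₁ p₂ ih₁ ih₂ =>
      simp only [map_cons, Fm.ren, SetGe.cons_right_iff, Fm.ge_imp_iff] at hΓ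
      rw [Multiset.map_add] at hΔ
      obtain ⟨⟨E, hE, rfl | hD⟩, hΓ⟩ := hΓ
      · obtain ⟨Γ', rfl⟩ := exists_cons_of_mem hE
        obtain ⟨Δ', rfl, hΔ'⟩ := exists_eq_add_of_add_le hΔ
        obtain ⟨q₁, hI₁, hmu₁⟩ := ih₁ h (Δ₁ := B.ren h ::ₘ Δ')
          (by simpa only [map_cons, Fm.ren] using hΓ.cons_self)
          (by simpa only [map_cons] using cons_le_cons _ hΔ')
        obtain ⟨q₂, hI₂, hmu₂⟩ := ih₂ h (by rw [map_cons]; exact hΓ.cons_self) le_rfl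
        refine ⟨(q₁.impL q₂).contrL, fun hp h1 => ?_,
          fun hm => add_le_add (hmu₁ hm) (hmu₂ hm)⟩
        obtain ⟨hcard, hp₁, hp₂⟩ := hp
        have hcard₁ := card_eq_one_of_isI hp₁
        refine ⟨h1, h1, hI₁ hp₁ ?_, hI₂ hp₂ ?_⟩ <;>
          simp only [card_cons, card_add, card_map] at hcard hcard₁ h1 ⊢ <;> omega
      · obtain ⟨q, hI, hmu⟩ := ih₂ h (by rw [map_cons]; exact hΓ.of_mem hE hD)
          (le_trans le_add_self hΔ)
        exact ⟨q, fun hp h1 => hI hp.2.2 h1, fun hm => (hmu hm).trans (by simp only [mu]; omega)⟩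
  | @impR B D Γ Δ p ih =>
      simp only [map_cons, Fm.ren] at hΔ
      obtain ⟨Δ', rfl, hΔ'⟩ := exists_eq_cons_of_cons_le hΔ
      have hΓB : SetGe (B.ren h ::ₘ Γ₁) ((B ::ₘ Γ).map (Fm.ren h)) := by
        rw [map_cons]; exact hΓ.cons_self
      obtain ⟨q, hI, hmu⟩ := ih h hΓB (Δ₁ := D.ren h ::ₘ Δ')
        (by simpa only [map_cons] using cons_le_cons _ hΔ')
      exact ⟨q.impR, fun hp h1 => ⟨h1, hI hp.2 (by simpa using h1)⟩,
        fun hm => add_le_add (hmu hm) (ite_zero_one_le_of_imp (hm h hΓB))⟩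
  | @allL B Γ Δ t p ih =>
      simp only [map_cons, Fm.ren, SetGe.cons_right_iff, Fm.ge_all_iff] at hΓ
      obtain ⟨⟨_, hE, rfl⟩, hΓ⟩ := hΓ
      obtain ⟨Γ', rfl⟩ := exists_cons_of_mem hE
      have hΓ' := (hΓ.of_mem hE (Fm.ge.refl _)).cons_self (F := (B.ren h).inst (t.ren h))
      obtain ⟨q, hI, hmu⟩ := ih h (by simpa only [map_cons, Fm.ren, Fm.ren_inst] using hΓ') hΔ
      exact ⟨q.allL _, fun hp h1 => ⟨h1, hI hp.2 h1⟩, hmu⟩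
  | @exR B Γ Δ t p ih =>
      simp only [map_cons, Fm.ren] at hΔ
      obtain ⟨Δ', rfl, hΔ'⟩ := exists_eq_cons_of_cons_le hΔ
      obtain ⟨q, hI, hmu⟩ := ih h hΓ (Δ₁ := (B.ren h).inst (t.ren h) ::ₘ Δ')
        (by simpa only [map_cons, Fm.ren_inst] using cons_le_cons _ hΔ')
      exact ⟨q.exR _, fun hp h1 => ⟨h1, hI hp.2 (by simpa using h1)⟩, hmu⟩
  | @exL B Γ Δ c hc p ih =>
      have hBc : ¬ B.constIn c := hc.1 (Fm.ex B) (mem_cons_self _ _)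
      have hΓc : ∀ F ∈ Γ, ¬ F.constIn c := fun F hF => hc.1 F (mem_cons_of_mem hF)
      simp only [map_cons, Fm.ren, SetGe.cons_right_iff, Fm.ge_ex_iff] at hΓ
      obtain ⟨⟨E, hE, rfl | ⟨c₀, hc₀⟩⟩, hΓ⟩ := hΓ
      · obtain ⟨e, he⟩ := exists_freshSeq (Fm.ex (B.ren h) ::ₘ Γ₁) Δ₁
        obtain ⟨q, hI, hmu⟩ := ih (Function.update h c e)
          (Γ₁ := (B.ren h).inst (Tm.const e) ::ₘ Γ₁) (Δ₁ := Δ₁)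
          (by rw [map_cons, Fm.ren_update_inst_const hBc, Fm.map_ren_update hΓc]
              exact hΓ.cons_self)
          (by rwa [Fm.map_ren_update hc.2])
        obtain ⟨Γ', rfl⟩ := exists_cons_of_mem hE
        exact ⟨(CProof.exL e he q).contrL, fun hp h1 => ⟨h1, h1, hI hp.2 h1⟩, hmu⟩
      · obtain ⟨q, hI, hmu⟩ := ih (Function.update h c c₀) (Γ₁ := Γ₁) (Δ₁ := Δ₁)
          (by rw [map_cons, Fm.ren_update_inst_const hBc, Fm.map_ren_update hΓc]
              exact hΓ.of_mem hE hc₀)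
          (by rwa [Fm.map_ren_update hc.2])
        exact ⟨q, fun hp h1 => hI hp.2 h1, hmu⟩
  | @allR B Γ Δ c hc p ih =>
      have hBc : ¬ B.constIn c := hc.2 (Fm.all B) (mem_cons_self _ _)
      have hΔc : ∀ F ∈ Δ, ¬ F.constIn c := fun F hF => hc.2 F (mem_cons_of_mem hF)
      simp only [map_cons, Fm.ren] at hΔ
      obtain ⟨Δ', rfl, hΔ'⟩ := exists_eq_cons_of_cons_le hΔ
      obtain ⟨e, he⟩ := exists_freshSeq Γ₁ (Fm.all (B.ren h) ::ₘ Δ')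
      obtain ⟨q, hI, hmu⟩ := ih (Function.update h c e) (Γ₁ := Γ₁)
        (Δ₁ := (B.ren h).inst (Tm.const e) ::ₘ Δ')
        (by rwa [Fm.map_ren_update hc.1])
        (by rw [map_cons, Fm.ren_update_inst_const hBc, Fm.map_ren_update hΔc]
            exact cons_le_cons _ hΔ')
      exact ⟨CProof.allR e he q, fun hp h1 => ⟨h1, hI hp.2 (by simpa using h1)⟩, hmu⟩

end CProof

theorem iProvMonotone : IProvMonotone := fun h _ _ F hΓ ⟨p, hp⟩ =>
  have ⟨q, hq, _⟩ := p.exists_of_setGe_map_ren h hΓ (map_singleton (Fm.ren h) F).le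
  ⟨q, hq hp (card_singleton _)⟩

theorem IProv.of_setGe {Γ Γ₁ : Multiset Fm} {F : Fm} (hF : IProv Γ F) (hΓ : SetGe Γ₁ Γ) :
    IProv Γ₁ F := by
  simpa using iProvMonotone id (by simpa using hΓ) hF

theorem CProof.exists_mu_le_of_setGe {Γ Δ Γ₁ Δ₁ : Multiset Fm} (p : CProof Γ Δ)
    (hΓ : SetGe Γ₁ Γ) (hΔ : Δ ≤ Δ₁) : ∃ q : CProof Γ₁ Δ₁, q.mu ≤ p.mu :=
  have ⟨q, _, hq⟩ := p.exists_of_setGe_map_ren id (by simpa using hΓ) (by simpa using hΔ)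
  ⟨q, hq iProvMonotone⟩

theorem CProof.setGe_of_hasOrL {B D : Fm} {S P Γ Δ : Multiset Fm} (p : CProof Γ Δ)
    (hocc : CProof.hasOrL _ _ p B D S P) : SetGe (D ::ₘ S) Γ := by
  induction p with
  | ax => exact hocc.elim
  | contrL _ ih | impR _ ih | allL _ _ ih => exact (ih hocc).of_cons_right
  | contrR _ ih | botR _ ih | orR1 _ ih | orR2 _ ih | exR _ _ ih | allR _ _ _ ih => exact ih hocc
  | andL _ ih => exact (ih hocc).of_cons_right.of_cons_right
  | andR _ _ ih₁ ih₂ => exact hocc.elim ih₁ ih₂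
  | orL _ _ ih₁ ih₂ =>
      rcases hocc with ⟨rfl, rfl, rfl, rfl⟩ | hocc | hocc
      · exact (SetGe.refl _).cons_left.of_mem (mem_cons_self _ _) (Fm.ge.disjr (Fm.ge.refl _))
      · exact (ih₁ hocc).mono_head Fm.ge.disjl
      · exact (ih₂ hocc).mono_head Fm.ge.disjr
  | impL _ _ ih₁ ih₂ => exact hocc.elim ih₁ fun hocc => (ih₂ hocc).mono_head Fm.ge.imp
  | exL c _ _ ih => exact (ih hocc).mono_head (Fm.ge.ex c)

theorem Fm.dFm_subst_and_gFm_subst (F : Fm) (k : ℕ) (u : Tm) :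
    (DFm F → DFm (F.subst k u)) ∧ (GFm F → GFm (F.subst k u)) := by
  induction F generalizing k with
  | top => exact ⟨fun _ => .top, fun _ => .top⟩
  | bot => exact ⟨fun _ => .bot, fun _ => .bot⟩
  | atom => exact ⟨fun _ => .atom, fun _ => .atom⟩
  | conj a b iha ihb =>
      refine ⟨fun h => ?_, fun h => ?_⟩ <;> cases h with
      | conj ha hb => first
        | exact .conj ((iha k).1 ha) ((ihb k).1 hb)
        | exact .conj ((iha k).2 ha) ((ihb k).2 hb)
  | disj a b iha ihb =>
      refine ⟨fun h => ?_, fun h => ?_⟩ <;> cases h with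
      | disj ha hb => first
        | exact .disj ((iha k).1 ha) ((ihb k).1 hb)
        | exact .disj ((iha k).2 ha) ((ihb k).2 hb)
  | imp a b iha ihb =>
      refine ⟨fun h => ?_, fun h => ?_⟩ <;> cases h with
      | imp ha hb => first
        | exact .imp ((iha k).2 ha) ((ihb k).1 hb)
        | exact .imp ((iha k).1 ha) ((ihb k).2 hb)
  | ex a ih =>
      refine ⟨fun h => ?_, fun h => ?_⟩ <;> cases h with
      | ex ha => first
        | exact .ex ((ih (k + 1)).1 ha)
        | exact .ex ((ih (k + 1)).2 ha)
  | all a ih =>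
      refine ⟨fun h => ?_, nofun⟩
      cases h with
      | all ha => exact .all ((ih (k + 1)).1 ha)

theorem DFm.inst {F : Fm} (u : Tm) (h : DFm F) : DFm (F.inst u) :=
  (F.dFm_subst_and_gFm_subst 0 u).1 h

theorem GFm.inst {F : Fm} (u : Tm) (h : GFm F) : GFm (F.inst u) :=
  (F.dFm_subst_and_gFm_subst 0 u).2 h

theorem CProof.mu_lt_mu_orL {B D : Fm} {Γ Δ : Multiset Fm} (p₁ : CProof (B ::ₘ Γ) Δ)
    (p₂ : CProof (D ::ₘ Γ) Δ) (hnc : ¬ ∃ F ∈ Δ, IProv ((B.disj D) ::ₘ Γ) F) :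
    p₂.mu < (p₁.orL p₂).mu := by
  have hnc' : ¬ ∃ F ∈ Δ, IProv (B ::ₘ Γ) F ∧ IProv (D ::ₘ Γ) F := by
    rintro ⟨F, hF, ⟨r₁, hr₁⟩, ⟨r₂, hr₂⟩⟩
    exact hnc ⟨F, hF, r₁.orL r₂, card_singleton F, hr₁, hr₂⟩
  simp only [mu, if_neg hnc']
  omega

theorem CProof.exists_mu_lt_of_hasOrL {B D : Fm} {S P : Multiset Fm}
    (hnc : ¬ ∃ F ∈ P, IProv ((B.disj D) ::ₘ S) F) {Γ Δ : Multiset Fm} (p : CProof Γ Δ)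
    (hΓ : ∀ X ∈ Γ, DFm X) (hΔ : ∀ X ∈ Δ, GFm X) (hocc : CProof.hasOrL _ _ p B D S P) :
    ∃ q : CProof (D ::ₘ S) Δ, q.mu < p.mu := by
  induction p with
  | ax => exact hocc.elim
  | contrL _ ih =>
      obtain ⟨hB, hΓ⟩ := forall_mem_cons.1 hΓ
      exact ih (by simp only [forall_mem_cons]; exact ⟨hB, hB, hΓ⟩) hΔ hocc
  | contrR _ ih =>
      obtain ⟨hB, hΔ⟩ := forall_mem_cons.1 hΔ
      obtain ⟨q, hq⟩ := ih hΓ (by simp only [forall_mem_cons]; exact ⟨hB, hB, hΔ⟩) hocc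
      exact ⟨q.contrR, hq⟩
  | botR _ ih =>
      obtain ⟨q, hq⟩ := ih hΓ (forall_mem_cons.2 ⟨.bot, (forall_mem_cons.1 hΔ).2⟩) hocc
      exact ⟨q.botR, hq⟩
  | andL _ ih =>
      obtain ⟨hBD, hΓ⟩ := forall_mem_cons.1 hΓ
      cases hBD with
      | conj hB hD =>
        exact ih (by simp only [forall_mem_cons]; exact ⟨hB, hD, .conj hB hD, hΓ⟩) hΔ hocc
  | andR p₁ p₂ ih₁ ih₂ =>
      obtain ⟨hBD, hΔ⟩ := forall_mem_cons.1 hΔ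
      cases hBD with
      | conj hB hD =>
        rcases hocc with hocc | hocc
        · obtain ⟨q₁, hq₁⟩ := ih₁ hΓ (forall_mem_cons.2 ⟨hB, hΔ⟩) hocc
          obtain ⟨q₂, hq₂⟩ := p₂.exists_mu_le_of_setGe (p₁.setGe_of_hasOrL hocc) le_rfl
          exact ⟨q₁.andR q₂, Nat.add_lt_add_of_lt_of_le hq₁ hq₂⟩
        · obtain ⟨q₂, hq₂⟩ := ih₂ hΓ (forall_mem_cons.2 ⟨hD, hΔ⟩) hocc
          obtain ⟨q₁, hq₁⟩ := p₁.exists_mu_le_of_setGe (p₂.setGe_of_hasOrL hocc) le_rfl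
          exact ⟨q₁.andR q₂, Nat.add_lt_add_of_le_of_lt hq₁ hq₂⟩
  | @orL B' D' Γ Δ p₁ p₂ ih₁ ih₂ =>
      obtain ⟨hBD, hΓ⟩ := forall_mem_cons.1 hΓ
      cases hBD with
      | disj hB hD =>
        rcases hocc with ⟨rfl, rfl, rfl, rfl⟩ | hocc | hocc
        · exact ⟨p₂, mu_lt_mu_orL p₁ p₂ hnc⟩
        · obtain ⟨q, hq⟩ := ih₁ (forall_mem_cons.2 ⟨hB, hΓ⟩) hΔ hocc
          exact ⟨q, by simp only [mu]; omega⟩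
        · obtain ⟨q, hq⟩ := ih₂ (forall_mem_cons.2 ⟨hD, hΓ⟩) hΔ hocc
          exact ⟨q, by simp only [mu]; omega⟩
  | orR1 _ ih =>
      obtain ⟨hBD, hΔ⟩ := forall_mem_cons.1 hΔ
      cases hBD with
      | disj hB _ =>
        obtain ⟨q, hq⟩ := ih hΓ (forall_mem_cons.2 ⟨hB, hΔ⟩) hocc
        exact ⟨q.orR1, hq⟩
  | orR2 _ ih =>
      obtain ⟨hBD, hΔ⟩ := forall_mem_cons.1 hΔ
      cases hBD with
      | disj _ hD =>
        obtain ⟨q, hq⟩ := ih hΓ (forall_mem_cons.2 ⟨hD, hΔ⟩) hocc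
        exact ⟨q.orR2, hq⟩
  | @impL B' D' Γ Δ Θ p₁ p₂ ih₁ ih₂ =>
      obtain ⟨hBD, hΓ⟩ := forall_mem_cons.1 hΓ
      have hΔΘ : (∀ X ∈ Δ, GFm X) ∧ ∀ X ∈ Θ, GFm X :=
        ⟨fun X hX => hΔ X (mem_add.2 (.inl hX)), fun X hX => hΔ X (mem_add.2 (.inr hX))⟩
      cases hBD with
      | imp hB hD =>
        rcases hocc with hocc | hocc
        · obtain ⟨q₁, hq₁⟩ := ih₁ (forall_mem_cons.2 ⟨.imp hB hD, hΓ⟩)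
            (forall_mem_cons.2 ⟨hB, hΔΘ.1⟩) hocc
          have hcov := p₁.setGe_of_hasOrL hocc
          obtain ⟨q₁', hq₁'⟩ := q₁.exists_mu_le_of_setGe
            ((SetGe.refl (D ::ₘ S)).cons_left (A := B'.imp D')) le_rfl
          obtain ⟨q₂', hq₂'⟩ := p₂.exists_mu_le_of_setGe hcov.of_cons_right.cons_self le_rfl
          obtain ⟨E, hE, hEBD⟩ := (SetGe.cons_right_iff.1 hcov).1
          obtain ⟨q, hq⟩ := (q₁'.impL q₂').exists_mu_le_of_setGe
            ((SetGe.refl _).of_mem hE hEBD) le_rfl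
          exact ⟨q, lt_of_le_of_lt hq (Nat.add_lt_add_of_lt_of_le (hq₁'.trans_lt hq₁) hq₂')⟩
        · obtain ⟨q₂, hq₂⟩ := ih₂ (forall_mem_cons.2 ⟨hD, hΓ⟩) hΔΘ.2 hocc
          obtain ⟨q, hq⟩ := q₂.exists_mu_le_of_setGe (SetGe.refl _) (le_add_self : Θ ≤ Δ + Θ)
          exact ⟨q, by simp only [mu]; omega⟩
  | @impR B' D' Γ Δ p ih =>
      obtain ⟨hBD, hΔ⟩ := forall_mem_cons.1 hΔ
      cases hBD with
      | imp hB hD =>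
        obtain ⟨q, hq⟩ := ih (forall_mem_cons.2 ⟨hB, hΓ⟩) (forall_mem_cons.2 ⟨hD, hΔ⟩) hocc
        obtain ⟨q', hq'⟩ := q.exists_mu_le_of_setGe
          ((SetGe.refl (D ::ₘ S)).cons_left (A := B')) le_rfl
        have hcov : SetGe (B' ::ₘ D ::ₘ S) (B' ::ₘ Γ) :=
          (p.setGe_of_hasOrL hocc).of_cons_right.cons_self
        exact ⟨q'.impR, Nat.add_lt_add_of_lt_of_le (hq'.trans_lt hq)
          (ite_zero_one_le_of_imp fun hI => hI.of_setGe hcov)⟩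
  | allL t _ ih =>
      obtain ⟨hB, hΓ⟩ := forall_mem_cons.1 hΓ
      cases hB with
      | all hB =>
        exact ih (by simp only [forall_mem_cons]; exact ⟨hB.inst t, .all hB, hΓ⟩) hΔ hocc
  | exR t _ ih =>
      obtain ⟨hB, hΔ⟩ := forall_mem_cons.1 hΔ
      cases hB with
      | ex hB =>
        obtain ⟨q, hq⟩ := ih hΓ (forall_mem_cons.2 ⟨hB.inst t, hΔ⟩) hocc
        exact ⟨q.exR t, hq⟩
  | exL c _ _ ih =>
      obtain ⟨hB, hΓ⟩ := forall_mem_cons.1 hΓ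
      cases hB with
      | ex hB => exact ih (forall_mem_cons.2 ⟨hB.inst _, hΓ⟩) hΔ hocc
  | allR _ _ _ _ =>
      nomatch hΔ _ (mem_cons_self _ _)

/-- Lemma `orl`: let `Γ` and `Δ` be multisets of D- and
G-formulas respectively, and let `Γ → Δ` have a C-proof `Ξ` containing an
∨-L rule with upper sequents `B,Σ → Π` and `D,Σ → Π` (lower sequent
`B∨D,Σ → Π`) such that no `F ∈ Π` gives an I-proof of `B∨D,Σ → F`, but some
`F ∈ Π` gives an I-proof of `D,Σ → F`. Then `D,Σ → Δ` has a C-proof of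
nonconstructiveness measure smaller than `μ(Ξ)`. -/
theorem statement_6 (Γ Δ : Multiset Fm) (hΓ : ∀ X ∈ Γ, DFm X) (hΔ : ∀ X ∈ Δ, GFm X)
    (p : CProof Γ Δ) (B D : Fm) (S P : Multiset Fm)
    (hocc : CProof.hasOrL _ _ p B D S P)
    (h1 : ¬ ∃ F ∈ P, IProv ((B.disj D) ::ₘ S) F)
    (h2 : ∃ F ∈ P, IProv (D ::ₘ S) F) :
    ∃ q : CProof (D ::ₘ S) Δ, q.mu < p.mu :=
  p.exists_mu_lt_of_hasOrL h1 hΓ hΔ hocc
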